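/- arXiv:1802.06284 — 11 statements merged into one kernel-verified Lean document; each statement's English description precedes it below -/
import Mathlib

section
/- Let κ be a proximity on a finite set A. Then the function d: A×A→ℝ defined by d(x,y) = (1/2)(κ(x,x) + κ(y,y)) − κ(x,y) is a metric on A: it is nonnegative, symmetric, satisfies d(x,y) = 0 if and only if x = y, and satisfies the triangle inequality d(x,y) + d(y,z) ≥ d(x,z) for all x, y, z ∈ A. -/
/-- If `κ` is a proximity on a finite set `A` (it satisfies the triangle
inequality for proximities, with strictness when `z = y` and `y ≠ x`), then
`d(x,y) = (1/2)(κ(x,x) + κ(y,y)) − κ(x,y)` is a metric on `A`. -/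
theorem proximity_to_distance {A : Type*} [Fintype A] (κ : A → A → ℝ)
    (h_tri : ∀ x y z : A, κ x y + κ x z - κ y z ≤ κ x x)
    (h_strict : ∀ x y : A, y ≠ x → κ x y + κ x y - κ y y < κ x x)
    (d : A → A → ℝ)
    (hd : ∀ x y : A, d x y = (1 / 2) * (κ x x + κ y y) - κ x y) :
    (∀ x y : A, 0 ≤ d x y) ∧
    (∀ x y : A, d x y = d y x) ∧
    (∀ x y : A, d x y = 0 ↔ x = y) ∧
    (∀ x y z : A, d x z ≤ d x y + d y z) := by
  have hsym : ∀ x y : A, κ x y = κ y x := by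
    intro x y
    have h1 := h_tri x y x
    have h2 := h_tri y x y
    linarith
  refine ⟨?_, ?_, ?_, ?_⟩
  · intro x y
    have := h_tri x y y
    rw [hd]
    linarith
  · intro x y
    rw [hd, hd, hsym x y]
    ring
  · intro x y
    constructor
    · intro h
      by_contra hne
      have := h_strict x y (fun hxy => hne (hxy ▸ rfl))
      rw [hd] at h
      have hs := hsym x y
      linarith
    · intro h
      subst h
      rw [hd]; ring
  · intro x y z
    have := h_tri y x z
    rw [hsym y x] at this
    rw [hd, hd, hd]
    linarith
end

section
/- Let K be a symmetric n×n real matrix and define the matrix D = (d_xy) by d_xy = (1/2)(K_xx + K_yy) − K_xy for x, y ∈ {1,…,n}. If D has a negative entry, or if all entries of D are nonnegative and √(d_xy) + √(d_yz) < √(d_xz) holds for some x, y, z ∈ {1,…,n}, then the function κ(x,y) = K_xy is not a proximity on {1,…,n}. -/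
open Real in
/-- Let `K` be a symmetric `n × n` real matrix and let
`d x y = (1/2)(K x x + K y y) − K x y`.  If `d` has a negative entry, or all entries of `d`
are nonnegative and `√(d x y) + √(d y z) < √(d x z)` for some `x, y, z`, then
`κ(x,y) = K x y` is not a proximity. -/
theorem not_proximity_of_sqrt_triangle_violation {n : ℕ} (K : Matrix (Fin n) (Fin n) ℝ)
    (hK : K.IsSymm)
    (d : Fin n → Fin n → ℝ)
    (hd : ∀ x y : Fin n, d x y = (1 / 2) * (K x x + K y y) - K x y)
    (h : (∃ x y : Fin n, d x y < 0) ∨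
      ((∀ x y : Fin n, 0 ≤ d x y) ∧
        ∃ x y z : Fin n, Real.sqrt (d x y) + Real.sqrt (d y z) < Real.sqrt (d x z))) :
    ¬ ((∀ x y z : Fin n, K x y + K x z - K y z ≤ K x x) ∧
       (∀ x y : Fin n, y ≠ x → K x y + K x y - K y y < K x x)) := by
  rintro ⟨h1, _⟩
  rcases h with ⟨x, y, hneg⟩ | ⟨hpos, x, y, z, hlt⟩
  · have := h1 x y y
    have := hd x y
    linarith
  · have hsym : ∀ a b : Fin n, K a b = K b a := fun a b => hK.apply b a
    have htri : d x z ≤ d x y + d y z := by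
      have := h1 y x z
      have := hsym y x
      have := hsym y z
      rw [hd x z, hd x y, hd y z]
      linarith
    have h2 : Real.sqrt (d x z) ≤ Real.sqrt (d x y) + Real.sqrt (d y z) := by
      calc Real.sqrt (d x z) ≤ Real.sqrt (d x y + d y z) := Real.sqrt_le_sqrt htri
        _ ≤ Real.sqrt (d x y) + Real.sqrt (d y z) := by
            have ha := Real.sq_sqrt (hpos x y)
            have hb := Real.sq_sqrt (hpos y z)
            have h1 := Real.sqrt_nonneg (d x y)
            have h2 := Real.sqrt_nonneg (d y z)
            have : d x y + d y z ≤ (Real.sqrt (d x y) + Real.sqrt (d y z)) ^ 2 := by nlinarith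
            calc Real.sqrt (d x y + d y z) ≤ Real.sqrt ((Real.sqrt (d x y) + Real.sqrt (d y z)) ^ 2) := Real.sqrt_le_sqrt this
              _ = _ := Real.sqrt_sq (by positivity)
    linarith
end

section
/- Let A be a finite set with |A| = n, let Σ ∈ ℝ, and let d be a metric on A. Then the function κ: A×A→ℝ defined by κ(x,y) = d(x,·) + d(y,·) − d(x,y) − d(·,·) + Σ/n, where d(x,·) = (1/n)·∑_{y∈A} d(x,y) and d(·,·) = (1/n²)·∑_{y,z∈A} d(y,z), is a Σ-proximity on A. -/
/-!
Every term of `κ x y` except `-d x y` is of the form `f x + f y + c`, and such terms cancel in the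
defect `κ x x - (κ x y + κ x z - κ y z)`, which therefore equals `d x y + d x z - d y z - d x x`.
So the triangle inequality for proximities is the triangle inequality of `d`, strict for `z = y`
because `d x y > 0`. The row sums equal `S` because the double centring of `d` has zero row sums.
-/

open Finset

theorem proximity_defect_eq {A : Type*} {f : A → ℝ} {d κ : A → A → ℝ} {c : ℝ}
    (hκ : ∀ x y, κ x y = f x + f y - d x y + c) (x y z : A) :
    κ x x - (κ x y + κ x z - κ y z) = d x y + d x z - d y z - d x x := by
  simp only [hκ]
  ring

theorem sum_doubleCentering_add_const {A : Type*} [Fintype A] [Nonempty A] (S : ℝ)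
    (d : A → A → ℝ) (x : A) :
    ∑ y, ((1 / (Fintype.card A : ℝ)) * (∑ u, d x u) + (1 / (Fintype.card A : ℝ)) * (∑ u, d y u)
        - d x y - (1 / ((Fintype.card A : ℝ) ^ 2)) * (∑ u, ∑ v, d u v)
        + S / Fintype.card A) = S := by
  have hcard : (Fintype.card A : ℝ) ≠ 0 := Nat.cast_ne_zero.2 Fintype.card_ne_zero
  simp only [sum_add_distrib, sum_sub_distrib, sum_const, card_univ, nsmul_eq_mul, ← mul_sum]
  field_simp
  ring

/-- Let `A` be a finite set with `|A| = n`, let `S ∈ ℝ`, and let `d` be a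
metric on `A`.  Then `κ(x,y) = d(x,·) + d(y,·) − d(x,y) − d(·,·) + S/n` is an `S`-proximity
on `A`:  it satisfies the triangle inequality for proximities (with strictness when `z = y`
and `y ≠ x`) and the normalization condition `∑_y κ(x,y) = S`. -/
theorem distance_to_sigma_proximity {A : Type*} [Fintype A] {n : ℕ} (hn : Fintype.card A = n)
    (S : ℝ) (d : A → A → ℝ)
    (h_nonneg : ∀ x y : A, 0 ≤ d x y)
    (h_symm : ∀ x y : A, d x y = d y x)
    (h_eq_zero : ∀ x y : A, d x y = 0 ↔ x = y)
    (h_tri : ∀ x y z : A, d x z ≤ d x y + d y z)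
    (κ : A → A → ℝ)
    (hκ : ∀ x y : A, κ x y =
      (1 / n) * (∑ u : A, d x u) + (1 / n) * (∑ u : A, d y u) - d x y
        - (1 / (n ^ 2 : ℝ)) * (∑ u : A, ∑ v : A, d u v) + S / n) :
    (∀ x y z : A, κ x y + κ x z - κ y z ≤ κ x x) ∧
    (∀ x y : A, y ≠ x → κ x y + κ x y - κ y y < κ x x) ∧
    (∀ x : A, ∑ y : A, κ x y = S) := by
  subst hn
  have hdiag (x : A) : d x x = 0 := (h_eq_zero x x).2 rfl
  have hdefect := proximity_defect_eq (κ := κ) (d := d)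
    (f := fun x ↦ (1 / Fintype.card A) * ∑ u, d x u)
    (c := S / Fintype.card A - (1 / (Fintype.card A ^ 2 : ℝ)) * ∑ u, ∑ v, d u v)
    (fun x y ↦ by rw [hκ]; ring)
  refine ⟨fun x y z ↦ ?_, fun x y hyx ↦ ?_, fun x ↦ ?_⟩
  · linarith [hdefect x y z, h_tri y x z, h_symm y x, hdiag x]
  · have hpos : 0 < d x y :=
      (h_nonneg x y).lt_of_ne fun h ↦ hyx ((h_eq_zero x y).1 h.symm).symm
    linarith [hdefect x y y, hdiag x, hdiag y]
  · have : Nonempty A := ⟨x⟩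
    simp only [hκ]
    exact sum_doubleCentering_add_const S d x
end

section
/- Let A be a finite set with |A| = n and fix Σ ∈ ℝ. Define ψ(κ)(x,y) = (1/2)(κ(x,x) + κ(y,y)) − κ(x,y) for a Σ-proximity κ, and φ(d)(x,y) = d(x,·) + d(y,·) − d(x,y) − d(·,·) + Σ/n for a metric d, where d(x,·) = (1/n)·∑_{y∈A} d(x,y) and d(·,·) = (1/n²)·∑_{y,z∈A} d(y,z). Then for every Σ-proximity κ on A one has φ(ψ(κ)) = κ, and for every metric d on A one has ψ(φ(d)) = d. -/
/-- Let `A` be a finite set with `|A| = n` and fix `S ∈ ℝ`.  Define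
`ψ(κ)(x,y) = (1/2)(κ(x,x) + κ(y,y)) − κ(x,y)` and
`φ(d)(x,y) = d(x,·) + d(y,·) − d(x,y) − d(·,·) + S/n`.  Then `φ(ψ(κ)) = κ` for every
`S`-proximity `κ` on `A`, and `ψ(φ(d)) = d` for every metric `d` on `A`. -/
theorem proximity_distance_correspondence {A : Type*} [Fintype A] {n : ℕ}
    (hn : Fintype.card A = n) (S : ℝ)
    (ψ : (A → A → ℝ) → (A → A → ℝ)) (φ : (A → A → ℝ) → (A → A → ℝ))
    (hψ : ∀ (κ : A → A → ℝ) (x y : A),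
      ψ κ x y = (1 / 2) * (κ x x + κ y y) - κ x y)
    (hφ : ∀ (d : A → A → ℝ) (x y : A),
      φ d x y = (1 / n) * (∑ u : A, d x u) + (1 / n) * (∑ u : A, d y u) - d x y
        - (1 / (n ^ 2 : ℝ)) * (∑ u : A, ∑ v : A, d u v) + S / n) :
    (∀ κ : A → A → ℝ,
      (∀ x y z : A, κ x y + κ x z - κ y z ≤ κ x x) →
      (∀ x y : A, y ≠ x → κ x y + κ x y - κ y y < κ x x) →
      (∀ x : A, ∑ y : A, κ x y = S) →
      φ (ψ κ) = κ) ∧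
    (∀ d : A → A → ℝ,
      (∀ x y : A, 0 ≤ d x y) →
      (∀ x y : A, d x y = d y x) →
      (∀ x y : A, d x y = 0 ↔ x = y) →
      (∀ x y z : A, d x z ≤ d x y + d y z) →
      ψ (φ d) = d) := by
  constructor
  · intro κ _ _ hsum
    funext x y
    have hne : Nonempty A := ⟨x⟩
    have hn0 : (n : ℝ) ≠ 0 := by
      have : 0 < Fintype.card A := Fintype.card_pos
      rw [hn] at this
      exact_mod_cast this.ne'
    have hcard : (Finset.univ : Finset A).card = n := by simpa using hn
    have hrow : ∀ z : A, ∑ u : A, ψ κ z u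
        = (n : ℝ) / 2 * κ z z + (∑ u : A, κ u u) / 2 - S := by
      intro z
      simp only [hψ]
      rw [Finset.sum_sub_distrib, hsum]
      simp only [mul_add, Finset.sum_add_distrib, Finset.sum_const, hcard,
        nsmul_eq_mul, ← Finset.mul_sum]
      ring
    have hdouble : ∑ u : A, ∑ v : A, ψ κ u v
        = (n : ℝ) * (∑ u : A, κ u u) - n * S := by
      simp only [hrow, Finset.sum_sub_distrib, Finset.sum_add_distrib,
        Finset.sum_const, hcard, nsmul_eq_mul, ← Finset.mul_sum]
      ring
    rw [hφ, hrow, hrow, hdouble, hψ]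
    field_simp
    ring
  · intro d _ _ hzero _
    funext x y
    have hne : Nonempty A := ⟨x⟩
    have hn0 : (n : ℝ) ≠ 0 := by
      have : 0 < Fintype.card A := Fintype.card_pos
      rw [hn] at this
      exact_mod_cast this.ne'
    have hxx : d x x = 0 := (hzero x x).mpr rfl
    have hyy : d y y = 0 := (hzero y y).mpr rfl
    rw [hψ, hφ, hφ, hφ, hxx, hyy]
    ring
end

section
/- Let W be a symmetric n×n real matrix with nonnegative entries and zero diagonal, and let 0 < α < 1/ρ(W) be such that I − αW is row diagonally dominant, i.e., 1 ≥ α·∑_{j≠i} w_ij for all i. Then the Katz kernel K = (I − αW)^{-1} satisfies the triangle inequality for proximities: K_xy + K_xz − K_yz ≤ K_xx for all x, y, z ∈ {1,…,n}. -/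
/-!
Put `A = 1 - α • W` and `p = K (e_x - e_y)`, so `A p = e_x - e_y` and, by symmetry of `K`, the
claim reads `p z ≤ p x`. This is a maximum principle for `A`. If `p` had a positive maximum
away from `x`, then at every maximiser the row `α W` would have to average the neighbouring values
without loss, so the maximum set would be a saturated component (`α ∑_{j ∈ T} W k j = 1` on `T`);
by symmetry its indicator lies in the kernel of the invertible `A`. If instead `p ≤ 0`, summing
`A p` over `{p < 0}` gives a nonnegative total that is a combination of the column defects
`1 - α ∑_{i ∈ D} W i j` with negative weights, so `{p < 0}` is saturated and hence empty.
-/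

open Matrix Finset

theorem spectrum.isUnit_one_sub_smul_of_inv_notMem {R A : Type*} [Field R] [Ring A] [Algebra R A]
    {a : A} {r : R} (hr : r ≠ 0) (h : r⁻¹ ∉ spectrum R a) : IsUnit (1 - r • a) := by
  have := (spectrum.notMem_iff.mp h).smul (Units.mk0 r hr)
  simpa [Algebra.algebraMap_eq_smul_one, smul_sub, smul_smul, hr] using this

namespace Matrix

variable {ι : Type*} [Fintype ι] [DecidableEq ι] {W : Matrix ι ι ℝ} {α : ℝ}

theorem one_sub_smul_mulVec_apply (p : ι → ℝ) (i : ι) :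
    ((1 - α • W) *ᵥ p) i = p i - α * ∑ j, W i j * p j := by
  rw [sub_mulVec, one_mulVec, smul_mulVec]
  rfl

theorem sum_one_sub_smul_mulVec_of_support_subset {D : Finset ι} {p : ι → ℝ}
    (hp : ∀ j ∉ D, p j = 0) :
    ∑ i ∈ D, ((1 - α • W) *ᵥ p) i = ∑ j ∈ D, p j * (1 - α * ∑ i ∈ D, W i j) := by
  have hsupp : ∀ i, ∑ j, W i j * p j = ∑ j ∈ D, W i j * p j := fun i =>
    (sum_subset (subset_univ D) fun j _ hj => by rw [hp j hj, mul_zero]).symm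
  simp only [one_sub_smul_mulVec_apply, hsupp, sum_sub_distrib, mul_sub, mul_one, mul_sum]
  rw [sum_comm]
  congr 1
  exact sum_congr rfl fun j _ => sum_congr rfl fun i _ => by ring

variable (hW : W.IsSymm) (hnn : ∀ i j, 0 ≤ W i j) (hα : 0 < α) (hdom : ∀ i, α * ∑ j, W i j ≤ 1)
include hW hnn hα hdom

theorem one_sub_smul_mulVec_indicator_eq_zero {T : Finset ι}
    (hT : ∀ k ∈ T, α * ∑ j ∈ T, W k j = 1) :
    (1 - α • W) *ᵥ (fun i => if i ∈ T then 1 else 0) = 0 := by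
  have hout : ∀ k ∈ T, ∀ j ∉ T, W k j = 0 := by
    intro k hk j hj
    have hrest : ∑ j ∈ univ \ T, W k j = 0 := by
      have := sum_sdiff (f := W k) (subset_univ T)
      nlinarith [hT k hk, hdom k, sum_nonneg fun i (_ : i ∈ univ \ T) => hnn k i]
    exact (sum_eq_zero_iff_of_nonneg fun i _ => hnn k i).mp hrest j (by simpa using hj)
  ext i
  simp only [one_sub_smul_mulVec_apply, mul_ite, mul_one, mul_zero, sum_ite_mem, univ_inter,
    Pi.zero_apply]
  by_cases hi : i ∈ T
  · simp [hi, hT i hi]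
  · simp [hi, sum_eq_zero fun j hj => (hW.apply i j).symm.trans (hout j hj i hi)]

variable (hA : IsUnit (1 - α • W))
include hA

theorem eq_empty_of_forall_rowSum_eq_one {T : Finset ι}
    (hT : ∀ k ∈ T, α * ∑ j ∈ T, W k j = 1) : T = ∅ := by
  have h := (mulVec_injective_iff_isUnit.mpr hA)
    ((one_sub_smul_mulVec_indicator_eq_zero hW hnn hα hdom hT).trans (mulVec_zero _).symm)
  refine eq_empty_of_forall_notMem fun k hk => ?_
  simpa [hk] using congrFun h k

theorem exists_eq_max_and_pos_mulVec {p : ι → ℝ} {m : ι} (hm : ∀ j, p j ≤ p m)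
    (hpos : 0 < p m) : ∃ k, p k = p m ∧ 0 < ((1 - α • W) *ᵥ p) k := by
  by_contra! hsub
  set T := univ.filter fun k => p k = p m
  suffices hT : ∀ k ∈ T, α * ∑ j ∈ T, W k j = 1 by
    simpa [T] using congrArg (m ∈ ·) (eq_empty_of_forall_rowSum_eq_one hW hnn hα hdom hA hT)
  intro k hk
  have hkm : p k = p m := (mem_filter.mp hk).2
  have hterm : ∀ j ∈ univ, W k j * p j ≤ W k j * p m := fun j _ =>
    mul_le_mul_of_nonneg_left (hm j) (hnn k j)
  have hlow : p m ≤ α * ∑ j, W k j * p j := by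
    have := hsub k hkm
    rw [one_sub_smul_mulVec_apply, hkm] at this
    linarith
  have hmid : α * ∑ j, W k j * p j ≤ α * ∑ j, W k j * p m :=
    mul_le_mul_of_nonneg_left (sum_le_sum hterm) hα.le
  have hup : α * ∑ j, W k j * p m ≤ p m := by
    rw [← sum_mul, ← mul_assoc]
    nlinarith [hdom k]
  have hsat : ∑ j, W k j * p j = ∑ j, W k j * p m := by
    have := le_antisymm hmid (hlow.trans' hup)
    exact mul_left_cancel₀ hα.ne' this
  have hout : ∀ j ∉ T, W k j = 0 := fun j hj => by
    have hj' : p j ≠ p m := by simpa [T] using hj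
    have := (sum_eq_sum_iff_of_le hterm).mp hsat j (mem_univ j)
    by_contra hWkj
    exact hj' (mul_left_cancel₀ hWkj this)
  have hrow : α * ∑ j, W k j = 1 := by
    have : (α * ∑ j, W k j) * p m = 1 * p m := by
      rw [one_mul, mul_assoc, sum_mul]
      linarith
    exact mul_right_cancel₀ hpos.ne' this
  rwa [sum_subset (subset_univ T) fun j _ hj => hout j hj]

theorem eq_zero_of_nonpos_of_sum_mulVec_nonneg {p : ι → ℝ} (hp : ∀ i, p i ≤ 0)
    (hmass : 0 ≤ ∑ i ∈ univ.filter (p · < 0), ((1 - α • W) *ᵥ p) i) : p = 0 := by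
  set D := univ.filter (p · < 0)
  have hneg : ∀ j ∈ D, p j < 0 := fun j hj => (mem_filter.mp hj).2
  have hout : ∀ j ∉ D, p j = 0 := fun j hj =>
    (hp j).antisymm (not_lt.mp fun h => hj (mem_filter.mpr ⟨mem_univ j, h⟩))
  have hterm : ∀ j ∈ D, p j * (1 - α * ∑ i ∈ D, W i j) ≤ 0 := fun j hj => by
    refine mul_nonpos_of_nonpos_of_nonneg (hneg j hj).le (sub_nonneg.mpr ?_)
    calc α * ∑ i ∈ D, W i j ≤ α * ∑ i, W j i := by
          simp_rw [← hW.apply j]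
          exact mul_le_mul_of_nonneg_left
            (sum_le_sum_of_subset_of_nonneg (subset_univ D) fun i _ _ => hnn i j) hα.le
      _ ≤ 1 := hdom j
  rw [sum_one_sub_smul_mulVec_of_support_subset hout] at hmass
  have hzero := (sum_eq_zero_iff_of_nonpos hterm).mp (le_antisymm (sum_nonpos hterm) hmass)
  have hD : D = ∅ := eq_empty_of_forall_rowSum_eq_one hW hnn hα hdom hA fun k hk => by
    have := (mul_eq_zero.mp (hzero k hk)).resolve_left (hneg k hk).ne
    simp_rw [← hW.apply k]
    linarith
  funext j
  exact hout j (hD ▸ notMem_empty j)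

theorem le_of_mulVec_eq_single_sub_single {p : ι → ℝ} {x y : ι}
    (hp : (1 - α • W) *ᵥ p = Pi.single x 1 - Pi.single y 1) (z : ι) : p z ≤ p x := by
  by_contra! hzx
  have : Nonempty ι := ⟨x⟩
  obtain ⟨m, hm⟩ := Finite.exists_max p
  rcases lt_or_ge 0 (p m) with hpos | hnpos
  · obtain ⟨k, hkm, hk⟩ := exists_eq_max_and_pos_mulVec hW hnn hα hdom hA hm hpos
    have hkx : k = x := by
      by_contra hkx
      rw [hp, Pi.sub_apply, Pi.single_eq_of_ne hkx, zero_sub, neg_pos] at hk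
      exact hk.not_ge (by rw [Pi.single_apply]; split_ifs <;> norm_num)
    exact (hzx.trans_le (hm z)).ne (hkx ▸ hkm)
  · have hx : p x < 0 := (hzx.trans_le (hm z)).trans_le hnpos
    have := eq_zero_of_nonpos_of_sum_mulVec_nonneg hW hnn hα hdom hA (fun i => (hm i).trans hnpos)
      (by
        rw [hp]
        simp only [Pi.sub_apply, sum_sub_distrib, sum_pi_single', mem_filter, mem_univ, true_and,
          if_pos hx]
        split_ifs <;> norm_num)
    simp [this] at hx

end Matrix

/-- Let `W` be a symmetric `n × n` real matrix with nonnegative entries and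
zero diagonal, and let `0 < α < 1/ρ(W)` be such that `I − αW` is row diagonally dominant,
i.e. `α * ∑_{j ≠ i} W i j ≤ 1` for all `i`.  Then the Katz kernel `K = (I − αW)⁻¹`
satisfies the triangle inequality for proximities. -/
theorem katz_kernel_triangle_ineq {n : ℕ} (W : Matrix (Fin n) (Fin n) ℝ)
    (hW_symm : W.IsSymm) (hW_nonneg : ∀ i j : Fin n, 0 ≤ W i j)
    (hW_diag : ∀ i : Fin n, W i i = 0)
    (α : ℝ) (hα : 0 < α) (hρ : ∀ μ ∈ spectrum ℝ W, α * |μ| < 1)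
    (hdom : ∀ i : Fin n, α * ∑ j ∈ Finset.univ.erase i, W i j ≤ 1)
    (K : Matrix (Fin n) (Fin n) ℝ) (hK : K = (1 - α • W)⁻¹) :
    ∀ x y z : Fin n, K x y + K x z - K y z ≤ K x x := by
  intro x y z
  have hrow : ∀ i, α * ∑ j, W i j ≤ 1 := fun i => by
    rw [← sum_erase univ (hW_diag i)]
    exact hdom i
  have hA : IsUnit (1 - α • W) := spectrum.isUnit_one_sub_smul_of_inv_notMem hα.ne' fun h => by
    simpa [abs_of_pos hα, hα.ne'] using hρ _ h
  have hKsymm : K.IsSymm := hK ▸ (isSymm_one.sub (hW_symm.smul α)).inv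
  have hp : (1 - α • W) *ᵥ (K *ᵥ (Pi.single x 1 - Pi.single y 1)) =
      Pi.single x 1 - Pi.single y 1 := by
    rw [mulVec_mulVec, hK, mul_nonsing_inv _ ((isUnit_iff_isUnit_det _).mp hA), one_mulVec]
  have := le_of_mulVec_eq_single_sub_single hW_symm hW_nonneg hα hrow hA hp z
  simp only [mulVec_sub, mulVec_single_one, Pi.sub_apply, col_apply, hKsymm.apply x z,
    hKsymm.apply y z] at this
  linarith
end

section
/- Let W be a symmetric n×n real matrix with n ≥ 2. Then there exists t₀ > 0 such that for all t with 0 < t < t₀, the communicability kernel K = exp(tW) is a proximity on {1,…,n}: K_xy + K_xz − K_yz ≤ K_xx for all x, y, z, with strict inequality whenever z = y and y ≠ x. -/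
/-!
At `t = 0` the kernel is the identity matrix, for which `κ x y + κ x z - κ y z < κ x x` holds
strictly whenever `y ≠ x` and `z ≠ x`. These finitely many strict inequalities persist for
small `t` by continuity of `t ↦ exp (t • W)`. The remaining triples, `y = x` or `z = x`, turn
the inequality into an equality, using symmetry of `exp (t • W)` in the second case.
-/

open NormedSpace Filter Topology

def IsProximity {α : Type*} (κ : α → α → ℝ) : Prop :=
  (∀ x y z, κ x y + κ x z - κ y z ≤ κ x x) ∧
    ∀ x y, y ≠ x → κ x y + κ x y - κ y y < κ x x

theorem isProximity_of_symm_of_lt {α : Type*} {κ : α → α → ℝ}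
    (hsymm : ∀ x y, κ x y = κ y x)
    (hlt : ∀ x y z, y ≠ x → z ≠ x → κ x y + κ x z - κ y z < κ x x) :
    IsProximity κ := by
  refine ⟨fun x y z => ?_, fun x y hy => hlt x y y hy hy⟩
  rcases eq_or_ne y x with rfl | hy
  · linarith
  rcases eq_or_ne z x with rfl | hz
  · linarith [hsymm y z]
  exact (hlt x y z hy hz).le

namespace Matrix

variable {ι : Type*}

theorem one_apply_add_one_apply_sub_one_apply_lt [DecidableEq ι] {x y z : ι}
    (hy : y ≠ x) (hz : z ≠ x) :
    (1 : Matrix ι ι ℝ) x y + (1 : Matrix ι ι ℝ) x z - (1 : Matrix ι ι ℝ) y z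
      < (1 : Matrix ι ι ℝ) x x := by
  simp only [one_apply, if_neg hy.symm, if_neg hz.symm]
  split_ifs <;> norm_num

variable [Fintype ι] [DecidableEq ι]

theorem continuous_exp_smul_apply (A : Matrix ι ι ℝ) (i j : ι) :
    Continuous fun t : ℝ => exp (t • A) i j := by
  -- Any normed-algebra structure inducing the product topology will do; take the operator norm.
  open scoped Norms.Operator in
  have hexp : Continuous fun t : ℝ => exp (t • A) :=
    exp_continuous.comp (continuous_id.smul continuous_const)
  exact hexp.matrix_elem i j

theorem eventually_nhds_zero_exp_smul_lt (A : Matrix ι ι ℝ) :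
    ∀ᶠ t : ℝ in 𝓝 0, ∀ x y z, y ≠ x → z ≠ x →
      exp (t • A) x y + exp (t • A) x z - exp (t • A) y z < exp (t • A) x x := by
  simp only [eventually_all]
  intro x y z hy hz
  have hcont (i j : ι) := (continuous_exp_smul_apply A i j).continuousAt (x := 0)
  refine ((hcont x y).add (hcont x z) |>.sub (hcont y z)).eventually_lt (hcont x x) ?_
  simpa only [Pi.sub_apply, Pi.add_apply, zero_smul, exp_zero] using
    one_apply_add_one_apply_sub_one_apply_lt hy hz

end Matrix

open NormedSpace in
theorem communicability_kernel_proximity_small_t_general {n : ℕ}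
    (W : Matrix (Fin n) (Fin n) ℝ) (hW_symm : W.IsSymm) :
    ∃ t₀ : ℝ, 0 < t₀ ∧ ∀ t : ℝ, 0 < t → t < t₀ →
      (∀ x y z : Fin n, exp (t • W) x y + exp (t • W) x z - exp (t • W) y z
          ≤ exp (t • W) x x) ∧
      (∀ x y : Fin n, y ≠ x →
        exp (t • W) x y + exp (t • W) x y - exp (t • W) y y < exp (t • W) x x) := by
  obtain ⟨ε, hε, hball⟩ := Metric.eventually_nhds_iff.mp W.eventually_nhds_zero_exp_smul_lt
  refine ⟨ε, hε, fun t ht htε => ?_⟩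
  have hsymm : (exp (t • W)).IsSymm := (hW_symm.smul t).exp
  exact isProximity_of_symm_of_lt (fun x y => hsymm.apply y x)
    (hball (by rwa [Real.dist_0_eq_abs, abs_of_pos ht]))

open NormedSpace in
/-- For a symmetric `n × n` real matrix `W` with `n ≥ 2`, there exists
`t₀ > 0` such that for all `0 < t < t₀` the communicability kernel `K = exp(tW)` is a
proximity on `{1,…,n}`. -/
theorem communicability_kernel_proximity_small_t {n : ℕ} (hn : 2 ≤ n)
    (W : Matrix (Fin n) (Fin n) ℝ) (hW_symm : W.IsSymm) :
    ∃ t₀ : ℝ, 0 < t₀ ∧ ∀ t : ℝ, 0 < t → t < t₀ →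
      (∀ x y z : Fin n, exp (t • W) x y + exp (t • W) x z - exp (t • W) y z
          ≤ exp (t • W) x x) ∧
      (∀ x y : Fin n, y ≠ x →
        exp (t • W) x y + exp (t • W) x y - exp (t • W) y y < exp (t • W) x x) :=
  communicability_kernel_proximity_small_t_general W hW_symm
end

section
/- Let W be a symmetric n×n real matrix with nonnegative entries and zero diagonal, let L = D − W be its Laplacian matrix, where D = Diag(W·1), and let t > 0. Then the matrix I + tL is invertible and the regularized Laplacian kernel K = (I + tL)^{-1} is row stochastic: all its entries are nonnegative and every row sums to 1. -/
/-- Let `W` be a symmetric `n × n` real matrix with nonnegative entries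
and zero diagonal, `L = D − W` its Laplacian with `D = Diag(W·1)`, and `t > 0`.  Then
`I + tL` is invertible and the regularized Laplacian kernel `K = (I + tL)⁻¹` is row
stochastic: all entries are nonnegative and every row sums to `1`. -/
theorem regularized_laplacian_row_stochastic {n : ℕ} (W : Matrix (Fin n) (Fin n) ℝ)
    (hW_symm : W.IsSymm) (hW_nonneg : ∀ i j : Fin n, 0 ≤ W i j)
    (hW_diag : ∀ i : Fin n, W i i = 0)
    (L : Matrix (Fin n) (Fin n) ℝ)
    (hL : L = Matrix.diagonal (fun i => ∑ j : Fin n, W i j) - W)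
    (t : ℝ) (ht : 0 < t)
    (K : Matrix (Fin n) (Fin n) ℝ) (hK : K = (1 + t • L)⁻¹) :
    IsUnit (1 + t • L) ∧ (∀ i j : Fin n, 0 ≤ K i j) ∧ (∀ i : Fin n, ∑ j : Fin n, K i j = 1) := by
  set A := 1 + t • L with hA
  -- entries of A
  have hdegnn : ∀ i, 0 ≤ ∑ j, W i j := fun i => Finset.sum_nonneg fun j _ => hW_nonneg i j
  have hAdiag : ∀ i, A i i = 1 + t * ∑ j, W i j := by
    intro i
    simp [hA, hL, Matrix.add_apply, Matrix.one_apply, Matrix.sub_apply, Matrix.diagonal_apply_eq,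
      hW_diag i]
  have hAoff : ∀ i j, i ≠ j → A i j = -(t * W i j) := by
    intro i j hij
    simp [hA, hL, Matrix.add_apply, Matrix.one_apply_ne hij, Matrix.sub_apply,
      Matrix.diagonal_apply_ne _ hij]
  have hAoff_nonpos : ∀ i j, i ≠ j → A i j ≤ 0 := by
    intro i j hij
    rw [hAoff i j hij]
    have := mul_nonneg ht.le (hW_nonneg i j)
    linarith
  -- row sums of A are 1
  have hArow : ∀ i, ∑ j, A i j = 1 := by
    intro i
    have : ∑ j, A i j = A i i + ∑ j ∈ Finset.univ.erase i, A i j := by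
      rw [Finset.add_sum_erase _ _ (Finset.mem_univ i)]
    rw [this, hAdiag i]
    have h2 : ∑ j ∈ Finset.univ.erase i, A i j = -(t * ∑ j ∈ Finset.univ.erase i, W i j) := by
      rw [Finset.mul_sum, ← Finset.sum_neg_distrib]
      exact Finset.sum_congr rfl fun j hj => hAoff i j (Finset.ne_of_mem_erase hj).symm
    rw [h2]
    have h3 : ∑ j ∈ Finset.univ.erase i, W i j = ∑ j, W i j := by
      rw [← Finset.add_sum_erase _ _ (Finset.mem_univ i), hW_diag i, zero_add]
    rw [h3]; ring
  -- strict diagonal dominance ⇒ det ≠ 0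
  have hdet : A.det ≠ 0 := by
    apply det_ne_zero_of_sum_row_lt_diag
    intro k
    have h1 : ∀ j ∈ Finset.univ.erase k, ‖A k j‖ = t * W k j := by
      intro j hj
      rw [hAoff k j (Finset.ne_of_mem_erase hj).symm, norm_neg, Real.norm_eq_abs,
        abs_of_nonneg (mul_nonneg ht.le (hW_nonneg k j))]
    rw [Finset.sum_congr rfl h1, ← Finset.mul_sum]
    have h3 : ∑ j ∈ Finset.univ.erase k, W k j = ∑ j, W k j := by
      rw [← Finset.add_sum_erase _ _ (Finset.mem_univ k), hW_diag k, zero_add]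
    rw [h3, hAdiag k, Real.norm_eq_abs, abs_of_pos (by nlinarith [mul_nonneg ht.le (hdegnn k)])]
    linarith
  have hunit : IsUnit A := by
    rw [Matrix.isUnit_iff_isUnit_det]
    exact isUnit_iff_ne_zero.mpr hdet
  have hAK : A * K = 1 := by rw [hK]; exact Matrix.mul_nonsing_inv A (isUnit_iff_ne_zero.mpr hdet)
  have hKA : K * A = 1 := by rw [hK]; exact Matrix.nonsing_inv_mul A (isUnit_iff_ne_zero.mpr hdet)
  refine ⟨hunit, ?_, ?_⟩
  · -- nonnegativity via min-entry argument on columns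
    intro i c
    by_contra hneg
    push_neg at hneg
    have hne : (Finset.univ : Finset (Fin n)).Nonempty := ⟨i, Finset.mem_univ i⟩
    obtain ⟨m, -, hm⟩ := Finset.exists_min_image Finset.univ (fun k => K k c) hne
    have hmneg : K m c < 0 := lt_of_le_of_lt (hm i (Finset.mem_univ i)) hneg
    have key : (A * K) m c ≤ K m c := by
      rw [Matrix.mul_apply]
      calc ∑ k, A m k * K k c ≤ ∑ k, A m k * K m c := by
            apply Finset.sum_le_sum
            intro k _
            rcases eq_or_ne m k with rfl | hmk
            · exact le_rfl
            · exact mul_le_mul_of_nonpos_left (hm k (Finset.mem_univ k)) (hAoff_nonpos m k hmk)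
        _ = (∑ k, A m k) * K m c := by rw [Finset.sum_mul]
        _ = K m c := by rw [hArow m, one_mul]
    rw [hAK] at key
    have : (0:ℝ) ≤ (1 : Matrix (Fin n) (Fin n) ℝ) m c := by
      rcases eq_or_ne m c with rfl | h
      · simp
      · simp [Matrix.one_apply_ne h]
    linarith
  · intro i
    have h1 : ∑ j, (K * A) i j = 1 := by
      rw [hKA]
      rw [← Finset.add_sum_erase _ _ (Finset.mem_univ i)]
      have : ∑ j ∈ Finset.univ.erase i, (1 : Matrix (Fin n) (Fin n) ℝ) i j = 0 :=
        Finset.sum_eq_zero fun j hj => Matrix.one_apply_ne (Finset.ne_of_mem_erase hj).symm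
      simp [this]
    have h2 : ∑ j, (K * A) i j = ∑ k, K i k := by
      simp only [Matrix.mul_apply]
      rw [Finset.sum_comm]
      exact Finset.sum_congr rfl fun k _ => by rw [← Finset.mul_sum, hArow k, mul_one]
    rw [← h2, h1]
end

section
/- Let W be a symmetric n×n real matrix with nonnegative entries and zero diagonal with n ≥ 2, let L = D − W be its Laplacian matrix, where D = Diag(W·1), and let t > 0. Then the regularized Laplacian kernel K = (I + tL)^{-1} is a 1-proximity on {1,…,n}: K_xy + K_xz − K_yz ≤ K_xx for all x, y, z, with strict inequality whenever z = y and y ≠ x, and ∑_y K_xy = 1 for every x. Moreover, K is positive definite. -/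
/-!
The quadratic form of `L` is `½ ∑ W i j (v i - v j)²`, so `L` is positive semidefinite, `1 + t • L`
is positive definite and hence so is `K`; evaluating the form of `K` at `eₓ - e_y` gives the strict
inequality. Rows of `L` sum to `0`, so rows of `K` sum to `1`.

For the triangle inequality put `u = K (eₓ - e_y)`, so that `(1 + t • L) u = eₓ - e_y`. At a
maximum point `m` of `u` we have `(L u) m ≥ 0`, hence `u m ≤ ((1 + t • L) u) m`. If `m ≠ x` this is
`≤ 0`, so `u ≤ 0`; since the columns of `K` also sum to `1`, `∑ u = 0` and then `u = 0`, which is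
absurd. So `u` is maximal at `x`, i.e. `K z x - K z y ≤ K x x - K x y`, and symmetry of `K` turns
this into the triangle inequality.
-/

open Finset

namespace Matrix

variable {ι : Type*} [Fintype ι] [DecidableEq ι]

noncomputable def laplacian (W : Matrix ι ι ℝ) : Matrix ι ι ℝ :=
  diagonal (fun i => ∑ j, W i j) - W

noncomputable def regularizedLaplacianKernel (W : Matrix ι ι ℝ) (t : ℝ) : Matrix ι ι ℝ :=
  (1 + t • laplacian W)⁻¹

variable (W : Matrix ι ι ℝ)

theorem laplacian_mulVec_apply (v : ι → ℝ) (i : ι) :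
    (laplacian W *ᵥ v) i = ∑ j, W i j * (v i - v j) := by
  rw [laplacian, sub_mulVec, Pi.sub_apply, mulVec_diagonal, mulVec, dotProduct, sum_mul,
    ← sum_sub_distrib]
  exact sum_congr rfl fun j _ => by ring

theorem laplacian_mulVec_const (c : ℝ) : laplacian W *ᵥ (fun _ => c) = 0 := by
  ext i
  simp [laplacian_mulVec_apply]

theorem isSymm_laplacian (hW : W.IsSymm) : (laplacian W).IsSymm :=
  (isSymm_diagonal _).sub hW

theorem two_mul_dotProduct_laplacian_mulVec (hW : W.IsSymm) (v : ι → ℝ) :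
    2 * (v ⬝ᵥ laplacian W *ᵥ v) = ∑ i, ∑ j, W i j * (v i - v j) ^ 2 := by
  have hform : v ⬝ᵥ laplacian W *ᵥ v = ∑ i, ∑ j, W i j * (v i * (v i - v j)) := by
    simp only [dotProduct, laplacian_mulVec_apply, mul_sum]
    exact sum_congr rfl fun i _ => sum_congr rfl fun j _ => by ring
  have hswap : ∑ i, ∑ j, W i j * (v i * (v i - v j)) = ∑ i, ∑ j, W i j * (v j * (v j - v i)) := by
    rw [sum_comm]
    simp only [hW.apply]
  rw [two_mul, hform]
  nth_rw 2 [hswap]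
  rw [← sum_add_distrib]
  exact sum_congr rfl fun i _ => by rw [← sum_add_distrib]; exact sum_congr rfl fun j _ => by ring

theorem posSemidef_laplacian (hW : W.IsSymm) (hW₀ : ∀ i j, 0 ≤ W i j) :
    (laplacian W).PosSemidef := by
  refine .of_dotProduct_mulVec_nonneg (isHermitian_iff_isSymm.2 (isSymm_laplacian W hW))
    fun v => ?_
  have hsq : 0 ≤ ∑ i, ∑ j, W i j * (v i - v j) ^ 2 :=
    sum_nonneg fun i _ => sum_nonneg fun j _ => mul_nonneg (hW₀ i j) (sq_nonneg _)
  rw [star_trivial]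
  linarith [two_mul_dotProduct_laplacian_mulVec W hW v]

theorem laplacian_mulVec_apply_nonneg_of_isMax (hW₀ : ∀ i j, 0 ≤ W i j) {u : ι → ℝ} {m : ι}
    (hm : ∀ j, u j ≤ u m) : 0 ≤ (laplacian W *ᵥ u) m := by
  rw [laplacian_mulVec_apply]
  exact sum_nonneg fun j _ => mul_nonneg (hW₀ m j) (sub_nonneg.2 (hm j))

theorem le_one_add_smul_laplacian_mulVec_apply_of_isMax (hW₀ : ∀ i j, 0 ≤ W i j) {t : ℝ}
    (ht : 0 ≤ t) {u : ι → ℝ} {m : ι} (hm : ∀ j, u j ≤ u m) :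
    u m ≤ ((1 + t • laplacian W) *ᵥ u) m := by
  rw [add_mulVec, one_mulVec, smul_mulVec, Pi.add_apply, Pi.smul_apply, smul_eq_mul]
  exact le_add_of_nonneg_right (mul_nonneg ht (laplacian_mulVec_apply_nonneg_of_isMax W hW₀ hm))

theorem posDef_one_add_smul_laplacian (hW : W.IsSymm) (hW₀ : ∀ i j, 0 ≤ W i j) {t : ℝ}
    (ht : 0 ≤ t) : (1 + t • laplacian W).PosDef :=
  PosDef.one.add_posSemidef ((posSemidef_laplacian W hW hW₀).smul ht)

theorem PosDef.two_mul_apply_lt_add {K : Matrix ι ι ℝ} (hK : K.PosDef) {x y : ι} (hxy : x ≠ y) :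
    2 * K x y < K x x + K y y := by
  have hw : Pi.single x 1 - Pi.single y 1 ≠ (0 : ι → ℝ) := fun h => by
    simpa [hxy] using congrFun h x
  have hpos := hK.dotProduct_mulVec_pos hw
  simp only [star_trivial, mulVec_sub, sub_dotProduct, dotProduct_sub, mulVec_single_one,
    single_dotProduct, one_mul, col_apply] at hpos
  linarith [(isHermitian_iff_isSymm.1 hK.isHermitian).apply x y]

section Kernel

variable {t : ℝ} (hW : W.IsSymm) (hW₀ : ∀ i j, 0 ≤ W i j) (ht : 0 ≤ t)
include hW hW₀ ht

theorem posDef_regularizedLaplacianKernel : (regularizedLaplacianKernel W t).PosDef :=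
  (posDef_one_add_smul_laplacian W hW hW₀ ht).inv

theorem isSymm_regularizedLaplacianKernel : (regularizedLaplacianKernel W t).IsSymm :=
  isHermitian_iff_isSymm.1 (posDef_regularizedLaplacianKernel W hW hW₀ ht).isHermitian

theorem one_add_smul_laplacian_mul_regularizedLaplacianKernel :
    (1 + t • laplacian W) * regularizedLaplacianKernel W t = 1 :=
  mul_nonsing_inv _ <|
    (isUnit_iff_isUnit_det _).1 (posDef_one_add_smul_laplacian W hW hW₀ ht).isUnit

theorem sum_regularizedLaplacianKernel_apply (x : ι) :
    ∑ y, regularizedLaplacianKernel W t x y = 1 := by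
  have hM1 : (1 + t • laplacian W) *ᵥ (fun _ => (1 : ℝ)) = fun _ => 1 := by
    rw [add_mulVec, one_mulVec, smul_mulVec, laplacian_mulVec_const, smul_zero, add_zero]
  let _ := (posDef_one_add_smul_laplacian W hW hW₀ ht).isUnit.invertible
  simpa [mulVec, dotProduct, regularizedLaplacianKernel] using
    congrFun (inv_mulVec_eq_vec hM1.symm) x

theorem regularizedLaplacianKernel_sub_le_of_ne {x y : ι} (hxy : x ≠ y) (z : ι) :
    regularizedLaplacianKernel W t z x - regularizedLaplacianKernel W t z y ≤
      regularizedLaplacianKernel W t x x - regularizedLaplacianKernel W t x y := by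
  set K := regularizedLaplacianKernel W t
  set u : ι → ℝ := fun j => K j x - K j y
  have hMu : (1 + t • laplacian W) *ᵥ u = Pi.single x 1 - Pi.single y 1 := by
    have hKu : u = K *ᵥ (Pi.single x 1 - Pi.single y 1) := by
      ext j
      simp [u, mulVec_sub]
    rw [hKu, mulVec_mulVec, one_add_smul_laplacian_mul_regularizedLaplacianKernel W hW hW₀ ht,
      one_mulVec]
  have hsum : ∑ j, u j = 0 := by
    have hK : K.IsSymm := isSymm_regularizedLaplacianKernel W hW hW₀ ht
    have hrow : ∀ a, ∑ j, K a j = 1 := sum_regularizedLaplacianKernel_apply W hW hW₀ ht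
    simp only [u, sum_sub_distrib, hK.apply x, hK.apply y, hrow, sub_self]
  obtain ⟨m, -, hm⟩ := exists_max_image univ u ⟨x, mem_univ x⟩
  rcases eq_or_ne m x with rfl | hmx
  · exact hm z (mem_univ z)
  exfalso
  have hum : u m ≤ 0 := calc
    u m ≤ ((1 + t • laplacian W) *ᵥ u) m :=
      le_one_add_smul_laplacian_mulVec_apply_of_isMax W hW₀ ht fun j => hm j (mem_univ j)
    _ ≤ 0 := by
      rw [hMu]
      rcases eq_or_ne m y with rfl | hmy
      · simp [hmx]
      · simp [hmx, hmy]
  have hu₀ : u = 0 := funext fun j =>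
    (sum_eq_zero_iff_of_nonpos fun i _ => (hm i (mem_univ i)).trans hum).1 hsum j (mem_univ j)
  simpa [hu₀, hxy] using congrFun hMu x

theorem regularizedLaplacianKernel_add_sub_le (x y z : ι) :
    regularizedLaplacianKernel W t x y + regularizedLaplacianKernel W t x z -
      regularizedLaplacianKernel W t y z ≤ regularizedLaplacianKernel W t x x := by
  rcases eq_or_ne x y with rfl | hxy
  · simp
  have hK := isSymm_regularizedLaplacianKernel W hW hW₀ ht
  linarith [regularizedLaplacianKernel_sub_le_of_ne W hW hW₀ ht hxy z, hK.apply x z, hK.apply y z]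

end Kernel

end Matrix

open Matrix in
theorem regularized_laplacian_one_proximity_general {n : ℕ}
    (W : Matrix (Fin n) (Fin n) ℝ)
    (hW_symm : W.IsSymm) (hW_nonneg : ∀ i j : Fin n, 0 ≤ W i j)
    (L : Matrix (Fin n) (Fin n) ℝ)
    (hL : L = Matrix.diagonal (fun i => ∑ j : Fin n, W i j) - W)
    (t : ℝ) (ht : 0 < t)
    (K : Matrix (Fin n) (Fin n) ℝ) (hK : K = (1 + t • L)⁻¹) :
    (∀ x y z : Fin n, K x y + K x z - K y z ≤ K x x) ∧
    (∀ x y : Fin n, y ≠ x → K x y + K x y - K y y < K x x) ∧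
    (∀ x : Fin n, ∑ y : Fin n, K x y = 1) ∧
    K.PosDef := by
  obtain rfl : K = regularizedLaplacianKernel W t := by rw [hK, hL]; rfl
  have hK := posDef_regularizedLaplacianKernel W hW_symm hW_nonneg ht.le
  refine ⟨regularizedLaplacianKernel_add_sub_le W hW_symm hW_nonneg ht.le,
    fun x y hyx => ?_, sum_regularizedLaplacianKernel_apply W hW_symm hW_nonneg ht.le, hK⟩
  linarith [hK.two_mul_apply_lt_add hyx.symm]

/-- Let `W` be a symmetric `n × n` real matrix (`n ≥ 2`) with nonnegative
entries and zero diagonal, `L = D − W` its Laplacian with `D = Diag(W·1)`, and `t > 0`.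
Then the regularized Laplacian kernel `K = (I + tL)⁻¹` is a `1`-proximity on `{1,…,n}`
(triangle inequality for proximities, strict when `z = y ≠ x`, rows summing to `1`),
and `K` is positive definite. -/
theorem regularized_laplacian_one_proximity {n : ℕ} (hn : 2 ≤ n)
    (W : Matrix (Fin n) (Fin n) ℝ)
    (hW_symm : W.IsSymm) (hW_nonneg : ∀ i j : Fin n, 0 ≤ W i j)
    (hW_diag : ∀ i : Fin n, W i i = 0)
    (L : Matrix (Fin n) (Fin n) ℝ)
    (hL : L = Matrix.diagonal (fun i => ∑ j : Fin n, W i j) - W)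
    (t : ℝ) (ht : 0 < t)
    (K : Matrix (Fin n) (Fin n) ℝ) (hK : K = (1 + t • L)⁻¹) :
    (∀ x y z : Fin n, K x y + K x z - K y z ≤ K x x) ∧
    (∀ x y : Fin n, y ≠ x → K x y + K x y - K y y < K x x) ∧
    (∀ x : Fin n, ∑ y : Fin n, K x y = 1) ∧
    K.PosDef :=
  regularized_laplacian_one_proximity_general W hW_symm hW_nonneg L hL t ht K hK
end

section
/- Let W be a symmetric n×n real matrix with nonnegative entries and zero diagonal, let L = D − W be its Laplacian matrix with D = Diag(W·1), let t > 0, and let A = Diag(a) where a ∈ ℝⁿ has all entries positive. Then the matrix tA + L is positive definite, and the absorption kernel K = (tA + L)^{-1} satisfies the triangle inequality for proximities: K_xy + K_xz − K_yz ≤ K_xx for all x, y, z ∈ {1,…,n}. -/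
/-!
Write `M = diagonal c + L` with `c > 0` and `L` the Laplacian of the weights `W ≥ 0`, so that
`(M u)_w = c_w u_w + ∑_j W_wj (u_w - u_j)`. Positive definiteness comes from
`2 uᵀ L u = ∑_ij W_ij (u_i - u_j)²`. For the triangle inequality we use the discrete maximum
principle: if `(M u)_w ≤ 0` away from `x`, then `u ≤ max (u x) 0`, since at a maximiser
`w ≠ x` the Laplacian term is nonnegative and forces `c_w u_w ≤ 0`. Applied to the column
`K e_x` it gives `K_xy ≤ K_xx`; applied to `u = K (e_x - e_y)` it then gives `u_z ≤ u_x`, which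
is the triangle inequality after using the symmetry of `K`.
-/

open Matrix Finset

def weightedLaplacian {ι R : Type*} [Fintype ι] [DecidableEq ι] [Ring R]
    (W : Matrix ι ι R) : Matrix ι ι R :=
  diagonal (fun i => ∑ j, W i j) - W

def ProximityTriangle {ι : Type*} (K : Matrix ι ι ℝ) : Prop :=
  ∀ x y z, K x y + K x z - K y z ≤ K x x

section Laplacian

variable {ι R : Type*} [Fintype ι] [DecidableEq ι]

theorem weightedLaplacian_mulVec_apply [Ring R] (W : Matrix ι ι R) (v : ι → R) (i : ι) :
    (weightedLaplacian W *ᵥ v) i = ∑ j, W i j * (v i - v j) := by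
  rw [weightedLaplacian, sub_mulVec]
  simp only [Pi.sub_apply, mulVec_diagonal, mul_sub, sum_sub_distrib, sum_mul]
  rfl

theorem isSymm_weightedLaplacian [Ring R] {W : Matrix ι ι R} (hW : W.IsSymm) :
    (weightedLaplacian W).IsSymm :=
  (isSymm_diagonal _).sub hW

theorem two_mul_dotProduct_weightedLaplacian_mulVec [CommRing R] {W : Matrix ι ι R}
    (hW : W.IsSymm) (v : ι → R) :
    2 * (v ⬝ᵥ weightedLaplacian W *ᵥ v) = ∑ i, ∑ j, W i j * (v i - v j) ^ 2 := by
  have hform : v ⬝ᵥ weightedLaplacian W *ᵥ v = ∑ i, ∑ j, W i j * (v i * (v i - v j)) := by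
    simp only [dotProduct, weightedLaplacian_mulVec_apply, mul_sum]
    exact sum_congr rfl fun i _ => sum_congr rfl fun j _ => by ring
  have hswap : v ⬝ᵥ weightedLaplacian W *ᵥ v = ∑ i, ∑ j, W i j * (v j * (v j - v i)) := by
    rw [hform, sum_comm]
    exact sum_congr rfl fun i _ => sum_congr rfl fun j _ => by rw [hW.apply i j]
  rw [two_mul]
  nth_rewrite 1 [hform]
  rw [hswap, ← sum_add_distrib]
  refine sum_congr rfl fun i _ => ?_
  rw [← sum_add_distrib]
  exact sum_congr rfl fun j _ => by ring

theorem posSemidef_weightedLaplacian {W : Matrix ι ι ℝ} (hW : W.IsSymm)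
    (hW_nonneg : ∀ i j, 0 ≤ W i j) : (weightedLaplacian W).PosSemidef := by
  refine .of_dotProduct_mulVec_nonneg (isHermitian_iff_isSymm.mpr (isSymm_weightedLaplacian hW))
    fun v => ?_
  have hsq : 0 ≤ ∑ i, ∑ j, W i j * (v i - v j) ^ 2 :=
    sum_nonneg fun i _ => sum_nonneg fun j _ => mul_nonneg (hW_nonneg i j) (sq_nonneg _)
  rw [star_trivial]
  linarith [two_mul_dotProduct_weightedLaplacian_mulVec hW v]

theorem posDef_diagonal_add_weightedLaplacian {W : Matrix ι ι ℝ} (hW : W.IsSymm)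
    (hW_nonneg : ∀ i j, 0 ≤ W i j) {c : ι → ℝ} (hc : ∀ i, 0 < c i) :
    (diagonal c + weightedLaplacian W).PosDef :=
  (PosDef.diagonal hc).add_posSemidef (posSemidef_weightedLaplacian hW hW_nonneg)

theorem le_max_of_diagonal_add_weightedLaplacian_mulVec_nonpos {W : Matrix ι ι ℝ}
    (hW_nonneg : ∀ i j, 0 ≤ W i j) {c : ι → ℝ} (hc : ∀ i, 0 < c i)
    {u : ι → ℝ} {x : ι}
    (hu : ∀ w ≠ x, ((diagonal c + weightedLaplacian W) *ᵥ u) w ≤ 0) (z : ι) :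
    u z ≤ max (u x) 0 := by
  have : Nonempty ι := ⟨x⟩
  obtain ⟨w, hw⟩ := Finite.exists_max u
  by_cases hwx : w = x
  · exact (hwx ▸ hw z).trans (le_max_left _ _)
  have hlap : 0 ≤ (weightedLaplacian W *ᵥ u) w := by
    rw [weightedLaplacian_mulVec_apply]
    exact sum_nonneg fun j _ => mul_nonneg (hW_nonneg w j) (sub_nonneg.mpr (hw j))
  have hcw : c w * u w ≤ 0 := by
    have := hu w hwx
    rw [add_mulVec, Pi.add_apply, mulVec_diagonal] at this
    linarith
  have huw : u w ≤ 0 := nonpos_of_mul_nonpos_right hcw (hc w)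
  exact (hw z).trans (huw.trans (le_max_right _ _))

theorem proximityTriangle_inv_diagonal_add_weightedLaplacian {W : Matrix ι ι ℝ}
    (hW : W.IsSymm) (hW_nonneg : ∀ i j, 0 ≤ W i j) {c : ι → ℝ} (hc : ∀ i, 0 < c i) :
    ProximityTriangle (diagonal c + weightedLaplacian W)⁻¹ := by
  intro x y z
  have hM := posDef_diagonal_add_weightedLaplacian hW hW_nonneg hc
  set M := diagonal c + weightedLaplacian W
  have hK_symm : M⁻¹.IsSymm := isHermitian_iff_isSymm.mp hM.inv.isHermitian
  have hcol : ∀ v, M *ᵥ (M⁻¹ *ᵥ v) = v := fun v => by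
    rw [mulVec_mulVec, mul_nonsing_inv M ((isUnit_iff_isUnit_det M).mp hM.isUnit), one_mulVec]
  have hmax : ∀ u, (∀ w ≠ x, (M *ᵥ u) w ≤ 0) → ∀ z, u z ≤ max (u x) 0 := fun _ =>
    le_max_of_diagonal_add_weightedLaplacian_mulVec_nonpos hW_nonneg hc
  have hxy : M⁻¹ x y ≤ M⁻¹ x x := by
    have := hmax (M⁻¹ *ᵥ Pi.single x 1) (fun w hw => by rw [hcol, Pi.single_eq_of_ne hw]) y
    rwa [mulVec_single_one, col_apply, col_apply, max_eq_left hM.inv.diag_pos.le,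
      hK_symm.apply] at this
  have := hmax (M⁻¹ *ᵥ (Pi.single x 1 - Pi.single y 1))
    (fun w hw => by
      rw [hcol, Pi.sub_apply, Pi.single_eq_of_ne hw, zero_sub, neg_nonpos, Pi.single_apply]
      positivity) z
  rw [mulVec_sub, mulVec_single_one, mulVec_single_one, Pi.sub_apply, Pi.sub_apply, col_apply,
    col_apply, col_apply, col_apply, max_eq_left (sub_nonneg.mpr hxy)] at this
  linarith [hK_symm.apply x z, hK_symm.apply y z, hK_symm.apply x y]

end Laplacian

theorem absorption_kernel_proximity_general {n : ℕ} (W : Matrix (Fin n) (Fin n) ℝ)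
    (hW_symm : W.IsSymm) (hW_nonneg : ∀ i j : Fin n, 0 ≤ W i j)
    (L : Matrix (Fin n) (Fin n) ℝ)
    (hL : L = Matrix.diagonal (fun i => ∑ j : Fin n, W i j) - W)
    (t : ℝ) (ht : 0 < t)
    (a : Fin n → ℝ) (ha : ∀ i, 0 < a i)
    (K : Matrix (Fin n) (Fin n) ℝ) (hK : K = (t • Matrix.diagonal a + L)⁻¹) :
    (t • Matrix.diagonal a + L).PosDef ∧
    (∀ x y z : Fin n, K x y + K x z - K y z ≤ K x x) := by
  have hM : t • Matrix.diagonal a + L = diagonal (t • a) + weightedLaplacian W := by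
    rw [hL, weightedLaplacian, diagonal_smul]
  have htc : ∀ i, 0 < (t • a) i := fun i => mul_pos ht (ha i)
  rw [hK, hM]
  exact ⟨posDef_diagonal_add_weightedLaplacian hW_symm hW_nonneg htc,
    proximityTriangle_inv_diagonal_add_weightedLaplacian hW_symm hW_nonneg htc⟩

/-- Let `W` be a symmetric `n × n` real matrix with nonnegative entries
and zero diagonal, `L = D − W` its Laplacian with `D = Diag(W·1)`, `t > 0`, and
`A = Diag(a)` with `a` entrywise positive.  Then `tA + L` is positive definite and the
absorption kernel `K = (tA + L)⁻¹` satisfies the triangle inequality for proximities. -/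
theorem absorption_kernel_proximity {n : ℕ} (W : Matrix (Fin n) (Fin n) ℝ)
    (hW_symm : W.IsSymm) (hW_nonneg : ∀ i j : Fin n, 0 ≤ W i j)
    (hW_diag : ∀ i : Fin n, W i i = 0)
    (L : Matrix (Fin n) (Fin n) ℝ)
    (hL : L = Matrix.diagonal (fun i => ∑ j : Fin n, W i j) - W)
    (t : ℝ) (ht : 0 < t)
    (a : Fin n → ℝ) (ha : ∀ i, 0 < a i)
    (K : Matrix (Fin n) (Fin n) ℝ) (hK : K = (t • Matrix.diagonal a + L)⁻¹) :
    (t • Matrix.diagonal a + L).PosDef ∧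
    (∀ x y z : Fin n, K x y + K x z - K y z ≤ K x x) :=
  absorption_kernel_proximity_general W hW_symm hW_nonneg L hL t ht a ha K hK
end

section
/- Let W be a symmetric n×n real matrix with nonnegative entries and zero diagonal whose row sums d_i = ∑_j w_ij are all positive, let D = Diag(W·1), let P = D^{-1}W, let t > 0, let 0 < α < 1, and let A = Diag(a) with a ∈ ℝⁿ having all entries positive. Then each of the three matrices S = (tA + L)^{-1} (where L = D − W), S = (I − αP)^{-1}, and S = (D − αW)^{-1} has all entries positive and produces a transitional measure on the graph G with adjacency matrix W: for all vertices i, j, k one has S_ij·S_jk ≤ S_ik·S_jj, with equality if and only if every path in G from i to k visits j (i.e., every finite sequence of vertices i = v₀, v₁, …, v_m = k with w_{v_l v_{l+1}} > 0 for all l contains j among its terms). -/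
/-!
Up to a positive diagonal factor on the right, which does not affect the transitional
inequality, each kernel is `(1 - Q)⁻¹` with `Q = Diag(c)⁻¹ B`, where `B ≥ 0` has the positivity
pattern of `W` and row sums below `c`; for instance `(D - αW)⁻¹ = (1 - αP)⁻¹ D⁻¹`. As the row sums
of `Q` are below one, `G = (1 - Q)⁻¹ = ∑ Qᵐ`, so `G i k > 0` exactly when some `Q`-walk leads from
`i` to `k`. Zeroing row `j` of `Q` gives `Q'` whose walks cannot leave `j`, and the resolvent
identity `G - G' = G' (Q - Q') G` for `G' = (1 - Q')⁻¹` yields, for `k ≠ j`,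
`G i k * G j j - G i j * G j k = G' i k * G j j`. This is nonnegative and vanishes iff no walk
from `i` to `k` avoids `j`.
-/

/-- A strictly positive matrix `S` produces a transitional measure on the graph with
weighted adjacency matrix `W` if `S i j * S j k ≤ S i k * S j j` for all vertices
`i, j, k`, with equality iff every path in the graph from `i` to `k` visits `j`.
Paths are represented as lists of vertices whose consecutive entries are joined by
edges of positive weight. -/
def ProducesTransitionalMeasure {n : ℕ} (W S : Matrix (Fin n) (Fin n) ℝ) : Prop :=
  (∀ i j : Fin n, 0 < S i j) ∧
  ∀ i j k : Fin n,
    S i j * S j k ≤ S i k * S j j ∧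
    (S i j * S j k = S i k * S j j ↔
      ∀ p : List (Fin n), p.Chain' (fun u v => 0 < W u v) →
        p.head? = some i → p.getLast? = some k → j ∈ p)

open Matrix Relation

namespace List

variable {α : Type*} {r : α → α → Prop} {i j k : α}

theorem reflTransGen_of_isChain {p : List α} (hp : p.IsChain r) (hi : p.head? = some i)
    (hk : p.getLast? = some k) : ReflTransGen r i k := by
  have hne : p ≠ [] := by rintro rfl; simp at hi
  rw [head?_eq_some_head hne, Option.some_inj] at hi
  rw [getLast?_eq_some_getLast hne, Option.some_inj] at hk
  exact hi ▸ hk ▸ relationReflTransGen_of_exists_isChain p hp hne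

theorem exists_isChain_notMem_iff_reflTransGen (hkj : k ≠ j) :
    (∃ p : List α, p.IsChain r ∧ p.head? = some i ∧ p.getLast? = some k ∧ j ∉ p) ↔
      ReflTransGen (fun u v => u ≠ j ∧ r u v) i k := by
  constructor
  · rintro ⟨p, hp, hi, hk, hj⟩
    exact reflTransGen_of_isChain
      (hp.imp_of_mem_imp fun u _ hu _ huv => ⟨ne_of_mem_of_not_mem hu hj, huv⟩) hi hk
  · intro h
    induction h using ReflTransGen.head_induction_on with
    | refl => exact ⟨[k], by simp, rfl, rfl, by simpa using hkj.symm⟩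
    | head huv _ ih =>
      obtain ⟨p, hp, hi, hk, hj⟩ := ih
      refine ⟨_ :: p, hp.cons (by simpa [hi] using huv.2), rfl, ?_, ?_⟩
      · simp [getLast?_cons, hk]
      · simp [hj, huv.1.symm]

end List

namespace Matrix

variable {ι : Type*} [DecidableEq ι]

theorem updateRow_zero_apply_pos_iff {R : Type*} [Zero R] [Preorder R] {Q : Matrix ι ι R}
    {j u v : ι} : 0 < Q.updateRow j 0 u v ↔ u ≠ j ∧ 0 < Q u v := by
  by_cases hu : u = j <;> simp [updateRow_apply, hu]

variable [Fintype ι]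

theorem exists_pow_apply_pos_iff_reflTransGen {R : Type*} [Ring R] [LinearOrder R]
    [IsOrderedRing R] [PosMulStrictMono R] [Nontrivial R] {Q : Matrix ι ι R}
    (hQ : ∀ i j, 0 ≤ Q i j) {i k : ι} :
    (∃ m, 0 < (Q ^ m) i k) ↔ ReflTransGen (fun u v => 0 < Q u v) i k := by
  let := toQuiver Q
  simp only [pow_apply_pos_iff_nonempty_path hQ]
  constructor
  · rintro ⟨m, ⟨p, -⟩⟩
    induction p with
    | nil => exact .refl
    | cons _ e ih => exact ih.tail e.down
  · intro h
    induction h with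
    | refl => exact ⟨0, ⟨.nil, rfl⟩⟩
    | tail _ e ih =>
      obtain ⟨m, ⟨p, hp⟩⟩ := ih
      exact ⟨m + 1, ⟨p.cons ⟨e⟩, by simp [hp]⟩⟩

theorem apply_eq_of_updateRow_zero {R : Type*} [Ring R] {Q G G' : Matrix ι ι R} {j : ι}
    (hG : (1 - Q) * G = 1) (hG' : G' * (1 - Q.updateRow j 0) = 1) (i k : ι) :
    G i k = G' i k + G' i j * (G j k - (1 : Matrix ι ι R) j k) := by
  have hdiff : G - G' = G' * ((Q - Q.updateRow j 0) * G) := by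
    calc G - G' = G' * (1 - Q.updateRow j 0) * G - G' * ((1 - Q) * G) := by
          rw [hG', hG, one_mul, mul_one]
      _ = G' * ((Q - Q.updateRow j 0) * G) := by
          rw [mul_assoc, ← mul_sub, ← sub_mul, sub_sub_sub_cancel_left]
  have hQG : Q * G = G - 1 := by rw [sub_mul, one_mul] at hG; rw [← hG, sub_sub_cancel]
  have hrow : ∀ u, ((Q - Q.updateRow j 0) * G) u k =
      if u = j then G j k - (1 : Matrix ι ι R) j k else 0 := by
    intro u
    split_ifs with hu
    · subst hu
      rw [sub_mul, sub_apply, hQG]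
      simp [mul_apply]
    · simp [mul_apply, updateRow_ne hu]
  have hik := congrFun (congrFun hdiff i) k
  rw [sub_apply, mul_apply] at hik
  simp only [hrow, mul_ite, mul_zero, Finset.sum_ite_eq', Finset.mem_univ, if_true] at hik
  rw [← hik, add_sub_cancel]

theorem inv_diagonal_of_ne_zero {c : ι → ℝ} (hc : ∀ i, c i ≠ 0) :
    (diagonal c)⁻¹ = diagonal c⁻¹ :=
  inv_eq_left_inv <| by
    rw [diagonal_mul_diagonal, ← diagonal_one]
    exact congrArg diagonal (funext fun i => inv_mul_cancel₀ (hc i))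

structure IsStrictlySubstochastic (Q : Matrix ι ι ℝ) : Prop where
  nonneg : ∀ i j, 0 ≤ Q i j
  sum_row_lt_one : ∀ i, ∑ j, Q i j < 1

namespace IsStrictlySubstochastic

variable {Q : Matrix ι ι ℝ}

theorem updateRow_zero (hQ : Q.IsStrictlySubstochastic) (j : ι) :
    (Q.updateRow j 0).IsStrictlySubstochastic where
  nonneg u v := by by_cases hu : u = j <;> simp [updateRow_apply, hu, hQ.nonneg u v]
  sum_row_lt_one u := by by_cases hu : u = j <;> simp [updateRow_apply, hu, hQ.sum_row_lt_one u]

section Neumann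

attribute [local instance] Matrix.linftyOpNormedAddCommGroup Matrix.linftyOpNormedRing
  Matrix.linftyOpNormedAlgebra

private theorem norm_lt_one (hQ : Q.IsStrictlySubstochastic) : ‖Q‖ < 1 := by
  rw [linfty_opNorm_def, ← NNReal.coe_one, NNReal.coe_lt_coe, Finset.sup_lt_iff one_pos]
  intro i _
  rw [← NNReal.coe_lt_coe]
  push_cast
  simpa [Real.norm_of_nonneg (hQ.nonneg i _)] using hQ.sum_row_lt_one i

theorem hasSum_pow_apply (hQ : Q.IsStrictlySubstochastic) (i k : ι) :
    HasSum (fun m => (Q ^ m) i k) ((1 - Q)⁻¹ i k) := by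
  rw [inv_eq_left_inv (geom_series_mul_neg Q hQ.norm_lt_one)]
  exact Pi.hasSum.1 (Pi.hasSum.1 (summable_geometric_of_norm_lt_one hQ.norm_lt_one).hasSum i) k

theorem one_sub_mul_inv_one_sub (hQ : Q.IsStrictlySubstochastic) : (1 - Q) * (1 - Q)⁻¹ = 1 := by
  rw [inv_eq_left_inv (geom_series_mul_neg Q hQ.norm_lt_one)]
  exact mul_neg_geom_series Q hQ.norm_lt_one

end Neumann

theorem inv_one_sub_apply_nonneg (hQ : Q.IsStrictlySubstochastic) (i k : ι) :
    0 ≤ (1 - Q)⁻¹ i k :=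
  (hQ.hasSum_pow_apply i k).nonneg fun m => pow_apply_nonneg hQ.nonneg m i k

theorem inv_one_sub_apply_pos_iff (hQ : Q.IsStrictlySubstochastic) {i k : ι} :
    0 < (1 - Q)⁻¹ i k ↔ ReflTransGen (fun u v => 0 < Q u v) i k := by
  have hterm (m : ℕ) := pow_apply_nonneg hQ.nonneg m i k
  rw [← exists_pow_apply_pos_iff_reflTransGen hQ.nonneg]
  constructor
  · intro hpos
    by_contra! hzero
    have : (fun m => (Q ^ m) i k) = 0 := funext fun m => (hzero m).antisymm (hterm m)
    exact hpos.ne' ((hQ.hasSum_pow_apply i k).unique (this ▸ hasSum_zero))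
  · rintro ⟨m, hm⟩
    exact hm.trans_le (le_hasSum (hQ.hasSum_pow_apply i k) m fun m _ => hterm m)

theorem inv_one_sub_defect_eq_updateRow (hQ : Q.IsStrictlySubstochastic) {i j k : ι}
    (hkj : k ≠ j) :
    (1 - Q)⁻¹ i k * (1 - Q)⁻¹ j j - (1 - Q)⁻¹ i j * (1 - Q)⁻¹ j k =
      (1 - Q.updateRow j 0)⁻¹ i k * (1 - Q)⁻¹ j j := by
  have h := apply_eq_of_updateRow_zero hQ.one_sub_mul_inv_one_sub
    (mul_eq_one_comm.1 (hQ.updateRow_zero j).one_sub_mul_inv_one_sub)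
  rw [h i k, h i j, one_apply_ne' hkj, one_apply_eq]
  ring

end IsStrictlySubstochastic

end Matrix

theorem ProducesTransitionalMeasure.mul_diagonal {n : ℕ} {W S : Matrix (Fin n) (Fin n) ℝ}
    (h : ProducesTransitionalMeasure W S) {e : Fin n → ℝ} (he : ∀ i, 0 < e i) :
    ProducesTransitionalMeasure W (S * diagonal e) := by
  obtain ⟨hpos, htrans⟩ := h
  refine ⟨fun i k => by rw [Matrix.mul_diagonal]; exact mul_pos (hpos i k) (he k), fun i j k => ?_⟩
  have hejk := mul_pos (he j) (he k)
  simp only [Matrix.mul_diagonal]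
  rw [show S i j * e j * (S j k * e k) = S i j * S j k * (e j * e k) by ring,
    show S i k * e k * (S j j * e j) = S i k * S j j * (e j * e k) by ring,
    mul_le_mul_iff_left₀ hejk, mul_left_inj' hejk.ne']
  exact htrans i j k

section Kernels

variable {n : ℕ} {W : Matrix (Fin n) (Fin n) ℝ}

theorem producesTransitionalMeasure_inv_one_sub {Q : Matrix (Fin n) (Fin n) ℝ}
    (hQ : Q.IsStrictlySubstochastic) (hQW : ∀ i j, 0 < Q i j ↔ 0 < W i j)
    (hconn : ∀ i k : Fin n, ∃ p : List (Fin n),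
      p.IsChain (fun u v => 0 < W u v) ∧ p.head? = some i ∧ p.getLast? = some k) :
    ProducesTransitionalMeasure W (1 - Q)⁻¹ := by
  have hreach : (fun u v => 0 < Q u v) = fun u v => 0 < W u v := by ext; exact hQW _ _
  refine ⟨fun i k => ?_, fun i j k => ?_⟩
  · obtain ⟨p, hp, hi, hk⟩ := hconn i k
    exact hQ.inv_one_sub_apply_pos_iff.2 (hreach ▸ List.reflTransGen_of_isChain hp hi hk)
  obtain rfl | hkj := eq_or_ne k j
  · exact ⟨le_rfl, iff_of_true rfl fun p _ _ hk => List.mem_of_getLast? hk⟩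
  have hjj : 0 < (1 - Q)⁻¹ j j := hQ.inv_one_sub_apply_pos_iff.2 .refl
  have hdefect := hQ.inv_one_sub_defect_eq_updateRow (i := i) hkj
  have hvisit : (1 - Q.updateRow j 0)⁻¹ i k = 0 ↔
      ¬ ReflTransGen (fun u v => u ≠ j ∧ 0 < W u v) i k := by
    simp only [← hQW, ← updateRow_zero_apply_pos_iff,
      ← (hQ.updateRow_zero j).inv_one_sub_apply_pos_iff,
      ((hQ.updateRow_zero j).inv_one_sub_apply_nonneg i k).lt_iff_ne', not_not]
  refine ⟨by nlinarith [(hQ.updateRow_zero j).inv_one_sub_apply_nonneg i k], ?_⟩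
  rw [eq_comm, ← sub_eq_zero, hdefect, mul_eq_zero, or_iff_left hjj.ne', hvisit,
    ← List.exists_isChain_notMem_iff_reflTransGen hkj]
  simp only [not_exists, not_and, not_not]
  rfl

variable {B : Matrix (Fin n) (Fin n) ℝ} {c : Fin n → ℝ}

theorem producesTransitionalMeasure_inv_one_sub_diagonal_inv_mul (hB : ∀ i j, 0 ≤ B i j)
    (hBc : ∀ i, ∑ j, B i j < c i) (hBW : ∀ i j, 0 < B i j ↔ 0 < W i j)
    (hconn : ∀ i k : Fin n, ∃ p : List (Fin n),
      p.IsChain (fun u v => 0 < W u v) ∧ p.head? = some i ∧ p.getLast? = some k) :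
    ProducesTransitionalMeasure W (1 - diagonal c⁻¹ * B)⁻¹ := by
  have hc (i : Fin n) : 0 < (c i)⁻¹ :=
    inv_pos.2 ((Finset.sum_nonneg fun j _ => hB i j).trans_lt (hBc i))
  refine producesTransitionalMeasure_inv_one_sub ⟨fun i j => ?_, fun i => ?_⟩ (fun i j => ?_) hconn
    <;> simp only [diagonal_mul, Pi.inv_apply]
  · exact mul_nonneg (hc i).le (hB i j)
  · rw [← Finset.mul_sum, inv_mul_lt_one₀ (inv_pos.1 (hc i))]
    exact hBc i
  · exact (mul_pos_iff_of_pos_left (hc i)).trans (hBW i j)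

theorem producesTransitionalMeasure_inv_diagonal_sub (hB : ∀ i j, 0 ≤ B i j)
    (hBc : ∀ i, ∑ j, B i j < c i) (hBW : ∀ i j, 0 < B i j ↔ 0 < W i j)
    (hconn : ∀ i k : Fin n, ∃ p : List (Fin n),
      p.IsChain (fun u v => 0 < W u v) ∧ p.head? = some i ∧ p.getLast? = some k) :
    ProducesTransitionalMeasure W (diagonal c - B)⁻¹ := by
  have hc (i : Fin n) : 0 < c i := (Finset.sum_nonneg fun j _ => hB i j).trans_lt (hBc i)
  have hinv := inv_diagonal_of_ne_zero fun i => (hc i).ne'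
  have hdet : IsUnit (diagonal c).det := by
    rw [det_diagonal]
    exact (Finset.prod_ne_zero_iff.2 fun i _ => (hc i).ne').isUnit
  have hfactor : diagonal c - B = diagonal c * (1 - diagonal c⁻¹ * B) := by
    rw [mul_sub, mul_one, ← hinv, Matrix.mul_nonsing_inv_cancel_left _ _ hdet]
  rw [hfactor, Matrix.mul_inv_rev, hinv]
  exact (producesTransitionalMeasure_inv_one_sub_diagonal_inv_mul hB hBc hBW hconn).mul_diagonal
    fun i => inv_pos.2 (hc i)

end Kernels

theorem transitional_measure_kernels_general {n : ℕ} (W : Matrix (Fin n) (Fin n) ℝ)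
    (hW_nonneg : ∀ i j : Fin n, 0 ≤ W i j)
    (d : Fin n → ℝ) (hd : ∀ i : Fin n, d i = ∑ j : Fin n, W i j)
    (hd_pos : ∀ i : Fin n, 0 < d i)
    (hconn : ∀ i k : Fin n, ∃ p : List (Fin n),
      p.Chain' (fun u v => 0 < W u v) ∧ p.head? = some i ∧ p.getLast? = some k)
    (D L P : Matrix (Fin n) (Fin n) ℝ)
    (hD : D = Matrix.diagonal d) (hL : L = D - W) (hP : P = D⁻¹ * W)
    (t : ℝ) (ht : 0 < t) (α : ℝ) (hα0 : 0 < α) (hα1 : α < 1)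
    (a : Fin n → ℝ) (ha : ∀ i, 0 < a i) :
    ProducesTransitionalMeasure W (t • Matrix.diagonal a + L)⁻¹ ∧
    ProducesTransitionalMeasure W (1 - α • P)⁻¹ ∧
    ProducesTransitionalMeasure W (D - α • W)⁻¹ := by
  subst hD hL hP
  have hαW_nonneg (i j : Fin n) : 0 ≤ (α • W) i j := mul_nonneg hα0.le (hW_nonneg i j)
  have hαW_sum (i : Fin n) : ∑ j, (α • W) i j < d i := by
    simpa [← Finset.mul_sum, ← hd i] using mul_lt_of_lt_one_left (hd_pos i) hα1
  have hαW_pos (i j : Fin n) : 0 < (α • W) i j ↔ 0 < W i j := mul_pos_iff_of_pos_left hα0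
  have hLa : t • diagonal a + (diagonal d - W) = diagonal (t • a + d) - W := by
    rw [← diagonal_smul, add_sub_assoc', diagonal_add]
    rfl
  refine ⟨?_, ?_, producesTransitionalMeasure_inv_diagonal_sub hαW_nonneg hαW_sum hαW_pos hconn⟩
  · rw [hLa]
    refine producesTransitionalMeasure_inv_diagonal_sub hW_nonneg (fun i => ?_)
      (fun _ _ => Iff.rfl) hconn
    simpa [hd i] using mul_pos ht (ha i)
  · rw [inv_diagonal_of_ne_zero fun i => (hd_pos i).ne', ← mul_smul_comm]
    exact producesTransitionalMeasure_inv_one_sub_diagonal_inv_mul hαW_nonneg hαW_sum hαW_pos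
      hconn

/-- Let `W` be the adjacency matrix of a connected weighted graph
(symmetric, nonnegative, zero diagonal, positive row sums `d`), `D = Diag(W·1)`,
`L = D − W`, `P = D⁻¹W`, `t > 0`, `0 < α < 1`, and `A = Diag(a)` with `a` positive.
Then each of `(tA + L)⁻¹`, `(I − αP)⁻¹` and `(D − αW)⁻¹` has positive entries and
produces a transitional measure on the graph. -/
theorem transitional_measure_kernels {n : ℕ} (W : Matrix (Fin n) (Fin n) ℝ)
    (hW_symm : W.IsSymm) (hW_nonneg : ∀ i j : Fin n, 0 ≤ W i j)
    (hW_diag : ∀ i : Fin n, W i i = 0)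
    (d : Fin n → ℝ) (hd : ∀ i : Fin n, d i = ∑ j : Fin n, W i j)
    (hd_pos : ∀ i : Fin n, 0 < d i)
    (hconn : ∀ i k : Fin n, ∃ p : List (Fin n),
      p.Chain' (fun u v => 0 < W u v) ∧ p.head? = some i ∧ p.getLast? = some k)
    (D L P : Matrix (Fin n) (Fin n) ℝ)
    (hD : D = Matrix.diagonal d) (hL : L = D - W) (hP : P = D⁻¹ * W)
    (t : ℝ) (ht : 0 < t) (α : ℝ) (hα0 : 0 < α) (hα1 : α < 1)
    (a : Fin n → ℝ) (ha : ∀ i, 0 < a i) :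
    ProducesTransitionalMeasure W (t • Matrix.diagonal a + L)⁻¹ ∧
    ProducesTransitionalMeasure W (1 - α • P)⁻¹ ∧
    ProducesTransitionalMeasure W (D - α • W)⁻¹ :=
  transitional_measure_kernels_general W hW_nonneg d hd hd_pos hconn D L P hD hL hP t ht α hα0 hα1 a
    ha
end

section
/- Let S = (s_ij) be an n×n real matrix with all entries strictly positive such that s_ij·s_jk ≤ s_ik·s_jj for all i, j, k ∈ {1,…,n}. Then the function d(i,j) = (1/2)·ln( (s_ii·s_jj) / (s_ij·s_ji) ) is a pseudometric on {1,…,n}: d(i,j) ≥ 0, d(i,i) = 0, d(i,j) = d(j,i), and d(i,j) + d(j,k) ≥ d(i,k) for all i, j, k. Moreover, if S is symmetric, then the logarithmic similarity κ(i,j) = ln s_ij satisfies the non-strict triangle inequality for proximities: κ(i,j) + κ(i,k) − κ(j,k) ≤ κ(i,i) for all i, j, k. -/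
/-- Let `S` be an `n × n` matrix with strictly positive entries such that
`S i j * S j k ≤ S i k * S j j` for all `i, j, k`.  Then
`d(i,j) = (1/2)·ln((S i i · S j j)/(S i j · S j i))` is a pseudometric, and if moreover `S`
is symmetric, the logarithmic similarity `κ(i,j) = ln (S i j)` satisfies the non-strict
triangle inequality for proximities. -/
theorem log_similarity_pseudometric {n : ℕ} (S : Matrix (Fin n) (Fin n) ℝ)
    (hS_pos : ∀ i j : Fin n, 0 < S i j)
    (hS_trans : ∀ i j k : Fin n, S i j * S j k ≤ S i k * S j j)
    (d : Fin n → Fin n → ℝ)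
    (hd : ∀ i j : Fin n, d i j = (1 / 2) * Real.log ((S i i * S j j) / (S i j * S j i))) :
    ((∀ i j : Fin n, 0 ≤ d i j) ∧
     (∀ i : Fin n, d i i = 0) ∧
     (∀ i j : Fin n, d i j = d j i) ∧
     (∀ i j k : Fin n, d i k ≤ d i j + d j k)) ∧
    (S.IsSymm →
      ∀ i j k : Fin n,
        Real.log (S i j) + Real.log (S i k) - Real.log (S j k) ≤ Real.log (S i i)) := by
  constructor
  · refine ⟨?_, ?_, ?_, ?_⟩
    · intro i j
      rw [hd]
      have h1 : S i j * S j i ≤ S i i * S j j := hS_trans i j i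
      have h2 : (1:ℝ) ≤ (S i i * S j j) / (S i j * S j i) :=
        (one_le_div (mul_pos (hS_pos i j) (hS_pos j i))).2 h1
      have := Real.log_nonneg h2
      linarith
    · intro i
      rw [hd, div_self (ne_of_gt (mul_pos (hS_pos i i) (hS_pos i i))), Real.log_one]
      ring
    · intro i j
      rw [hd, hd, mul_comm (S i i) (S j j), mul_comm (S i j) (S j i)]
    · intro i j k
      rw [hd, hd, hd]
      have key : (S i j * S j k) * (S k j * S j i) ≤ (S i k * S j j) * (S k i * S j j) :=
        mul_le_mul (hS_trans i j k) (hS_trans k j i) (le_of_lt (mul_pos (hS_pos k j) (hS_pos j i))) (le_of_lt (mul_pos (hS_pos i k) (hS_pos j j)))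
      have hineq : (S i i * S k k) / (S i k * S k i) ≤
          ((S i i * S j j) / (S i j * S j i)) * ((S j j * S k k) / (S j k * S k j)) := by
        rw [div_mul_div_comm, div_le_div_iff₀ (mul_pos (hS_pos i k) (hS_pos k i)) (mul_pos (mul_pos (hS_pos i j) (hS_pos j i)) (mul_pos (hS_pos j k) (hS_pos k j)))]
        nlinarith [mul_le_mul_of_nonneg_left key
          (le_of_lt (mul_pos (hS_pos i i) (hS_pos k k)))]
      have hlog := Real.log_le_log (div_pos (mul_pos (hS_pos i i) (hS_pos k k)) (mul_pos (hS_pos i k) (hS_pos k i))) hineq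
      rw [Real.log_mul (ne_of_gt (div_pos (mul_pos (hS_pos i i) (hS_pos j j)) (mul_pos (hS_pos i j) (hS_pos j i)))) (ne_of_gt (div_pos (mul_pos (hS_pos j j) (hS_pos k k)) (mul_pos (hS_pos j k) (hS_pos k j))))] at hlog
      linarith
  · intro hsym i j k
    have hji : S j i = S i j := by
      have := hsym.apply i j
      simpa using this
    have h := hS_trans j i k
    rw [hji] at h
    have hlog := Real.log_le_log (mul_pos (hS_pos i j) (hS_pos i k)) h
    rw [Real.log_mul (ne_of_gt (hS_pos i j)) (ne_of_gt (hS_pos i k)),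
        Real.log_mul (ne_of_gt (hS_pos j k)) (ne_of_gt (hS_pos i i))] at hlog
    linarith
end
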